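/- arXiv:2410.24064 — 2 statements merged into one kernel-verified Lean document; each statement's English description precedes it below -/
import Mathlib

section
/- With trip(A) as above, the trace space |trip(A)| of trip(A) as an A^e-bimodule is canonically isomorphic to (A⊗|A|) ⊕ (|A|⊗A), via x⊗y⊗z̄ ↦ yx⊗|z| and x⊗ȳ⊗z̄ ↦ |x|⊗yz. -/
/-! The map `x⊗y⊗z̄ ↦ yx⊗|z|`, `x⊗ȳ⊗z̄ ↦ |x|⊗yz` kills the commutators of the outer action,
because `|·|` is cyclic. Conversely, modulo those commutators `x⊗y⊗z̄ = 1⊗yx⊗z̄` and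
`x⊗ȳ⊗z̄ = x⊗1̄⊗(yz)‾`, and these normal forms depend on `z` resp. `x` only through `|z|`
resp. `|x|`; this gives the inverse map. -/

set_option synthInstance.maxHeartbeats 1000000
set_option maxHeartbeats 2000000

open TensorProduct MulOpposite

noncomputable section

variable (K A : Type*) [Field K] [CharZero K] [Ring A] [Algebra K A]

/-- The triple of `A`: `trip(A) = ((A⊗A)⊗Aᵒᵖ) ⊕ (A⊗(Aᵒᵖ⊗Aᵒᵖ))`.  Each summand is a ring
(tensor product of algebras). -/
abbrev Trip := ((A ⊗[K] A) ⊗[K] Aᵐᵒᵖ) × (A ⊗[K] (Aᵐᵒᵖ ⊗[K] Aᵐᵒᵖ))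

instance : AddCommGroup (Trip K A) := by
  exact Prod.instAddCommGroup

variable {K A}

/-- The outer left action of `a⊗b̄ ∈ Aᵉ` on `trip(A)`:
`(a⊗b̄)·(x⊗y⊗z̄) = ax⊗y⊗b̄z̄` and `(a⊗b̄)·(x⊗ȳ⊗z̄) = ax⊗b̄ȳ⊗z̄`. -/
def tLAct (a b : A) (t : Trip K A) : Trip K A :=
  (((a ⊗ₜ[K] (1 : A)) ⊗ₜ[K] op b) * t.1,
    (a ⊗ₜ[K] ((op b : Aᵐᵒᵖ) ⊗ₜ[K] (1 : Aᵐᵒᵖ))) * t.2)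

/-- The outer right action of `a⊗b̄ ∈ Aᵉ` on `trip(A)`:
`(x⊗y⊗z̄)·(a⊗b̄) = x⊗ya⊗z̄b̄` and `(x⊗ȳ⊗z̄)·(a⊗b̄) = xa⊗ȳ⊗z̄b̄`. -/
def tRAct (a b : A) (t : Trip K A) : Trip K A :=
  (t.1 * (((1 : A) ⊗ₜ[K] a) ⊗ₜ[K] op b),
    t.2 * (a ⊗ₜ[K] ((1 : Aᵐᵒᵖ) ⊗ₜ[K] op b)))

variable (K A)

/-- The commutator subspace of `trip(A)` as an `Aᵉ`-bimodule: the trace space `|trip(A)|`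
is the quotient by this submodule. -/
def tripComm : Submodule K (Trip K A) :=
  Submodule.span K {w | ∃ (a b : A) (t : Trip K A), w = tLAct a b t - tRAct a b t}

/-- The commutator subspace `[A,A] ⊆ A`; the cyclic quotient `|A| = A/[A,A]`. -/
def cycComm : Submodule K A := Submodule.span K {x | ∃ a b : A, x = a * b - b * a}

section TraceTrip

variable {K A : Type*} [Field K] [Ring A] [Algebra K A]

variable (K) in
lemma cycComm_mk_mul_comm (a b : A) :
    (Submodule.Quotient.mk (a * b) : A ⧸ cycComm K A) = Submodule.Quotient.mk (b * a) :=
  (Submodule.Quotient.eq _).2 (Submodule.subset_span ⟨a, b, rfl⟩)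

lemma cycComm_le_ker {M : Type*} [AddCommGroup M] [Module K M] (f : A →ₗ[K] M)
    (hf : ∀ a b : A, f (a * b) = f (b * a)) : cycComm K A ≤ LinearMap.ker f := by
  rw [cycComm, Submodule.span_le]
  rintro _ ⟨a, b, rfl⟩
  simp [hf]

lemma tripComm_mk_tLAct (a b : A) (t : Trip K A) :
    (Submodule.Quotient.mk (tLAct a b t) : Trip K A ⧸ tripComm K A) =
      Submodule.Quotient.mk (tRAct a b t) :=
  (Submodule.Quotient.eq _).2 (Submodule.subset_span ⟨a, b, t, rfl⟩)

lemma tripComm_le_ker {M : Type*} [AddCommGroup M] [Module K M] (f : Trip K A →ₗ[K] M)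
    (hf : ∀ (a b : A) (t : Trip K A), f (tLAct a b t) = f (tRAct a b t)) :
    tripComm K A ≤ LinearMap.ker f := by
  rw [tripComm, Submodule.span_le]
  rintro _ ⟨a, b, t, rfl⟩
  simp [hf]

-- `simp` cannot rewrite `q * 0` here: the zero of `Trip` is not syntactically the zero of the
-- tensor product ring, so `M₀` is given explicitly.
lemma tLAct_inl (a b : A) (p : (A ⊗[K] A) ⊗[K] Aᵐᵒᵖ) :
    tLAct a b ((p, 0) : Trip K A) = (((a ⊗ₜ[K] (1 : A)) ⊗ₜ[K] op b) * p, 0) :=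
  Prod.ext rfl (mul_zero (M₀ := A ⊗[K] (Aᵐᵒᵖ ⊗[K] Aᵐᵒᵖ)) _)

lemma tRAct_inl (a b : A) (p : (A ⊗[K] A) ⊗[K] Aᵐᵒᵖ) :
    tRAct a b ((p, 0) : Trip K A) = (p * (((1 : A) ⊗ₜ[K] a) ⊗ₜ[K] op b), 0) :=
  Prod.ext rfl (zero_mul (M₀ := A ⊗[K] (Aᵐᵒᵖ ⊗[K] Aᵐᵒᵖ)) _)

lemma tLAct_inr (a b : A) (q : A ⊗[K] (Aᵐᵒᵖ ⊗[K] Aᵐᵒᵖ)) :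
    tLAct a b ((0, q) : Trip K A) = (0, (a ⊗ₜ[K] ((op b : Aᵐᵒᵖ) ⊗ₜ[K] (1 : Aᵐᵒᵖ))) * q) :=
  Prod.ext (mul_zero (M₀ := (A ⊗[K] A) ⊗[K] Aᵐᵒᵖ) _) rfl

lemma tRAct_inr (a b : A) (q : A ⊗[K] (Aᵐᵒᵖ ⊗[K] Aᵐᵒᵖ)) :
    tRAct a b ((0, q) : Trip K A) = (0, q * (a ⊗ₜ[K] ((1 : Aᵐᵒᵖ) ⊗ₜ[K] op b))) :=
  Prod.ext (zero_mul (M₀ := (A ⊗[K] A) ⊗[K] Aᵐᵒᵖ) _) rfl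

lemma tripComm_mk_inl (a b x y z : A) :
    (Submodule.Quotient.mk (((a * x) ⊗ₜ[K] y) ⊗ₜ[K] op (z * b), 0) : Trip K A ⧸ tripComm K A) =
      Submodule.Quotient.mk ((x ⊗ₜ[K] (y * a)) ⊗ₜ[K] op (b * z), 0) := by
  simpa [tLAct_inl, tRAct_inl, Algebra.TensorProduct.tmul_mul_tmul] using
    tripComm_mk_tLAct a b (((x ⊗ₜ[K] y) ⊗ₜ[K] op z, 0) : Trip K A)

lemma tripComm_mk_inr (a b x y z : A) :
    (Submodule.Quotient.mk (0, (a * x) ⊗ₜ[K] (op (y * b) ⊗ₜ[K] op z)) :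
        Trip K A ⧸ tripComm K A) =
      Submodule.Quotient.mk (0, (x * a) ⊗ₜ[K] (op y ⊗ₜ[K] op (b * z))) := by
  simpa [tLAct_inr, tRAct_inr, Algebra.TensorProduct.tmul_mul_tmul] using
    tripComm_mk_tLAct a b ((0, x ⊗ₜ[K] (op y ⊗ₜ[K] op z)) : Trip K A)

variable (K A) in
def traceMapFst : (A ⊗[K] A) ⊗[K] Aᵐᵒᵖ →ₗ[K] A ⊗[K] (A ⧸ cycComm K A) :=
  TensorProduct.map (LinearMap.mul' K A ∘ₗ (TensorProduct.comm K A A).toLinearMap)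
    ((cycComm K A).mkQ ∘ₗ (opLinearEquiv K).symm.toLinearMap)

variable (K A) in
def traceMapSnd : A ⊗[K] (Aᵐᵒᵖ ⊗[K] Aᵐᵒᵖ) →ₗ[K] (A ⧸ cycComm K A) ⊗[K] A :=
  TensorProduct.map (cycComm K A).mkQ
    ((opLinearEquiv K).symm.toLinearMap ∘ₗ LinearMap.mul' K Aᵐᵒᵖ ∘ₗ
      (TensorProduct.comm K Aᵐᵒᵖ Aᵐᵒᵖ).toLinearMap)

@[simp] lemma traceMapFst_tmul (x y : A) (z : Aᵐᵒᵖ) :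
    traceMapFst K A ((x ⊗ₜ[K] y) ⊗ₜ[K] z) = (y * x) ⊗ₜ[K] Submodule.Quotient.mk (unop z) := by
  simp [traceMapFst]

@[simp] lemma traceMapSnd_tmul (x : A) (y z : Aᵐᵒᵖ) :
    traceMapSnd K A (x ⊗ₜ[K] (y ⊗ₜ[K] z)) =
      (Submodule.Quotient.mk x : A ⧸ cycComm K A) ⊗ₜ[K] (unop y * unop z) := by
  simp [traceMapSnd]

lemma traceMapFst_tLAct (a b : A) (p : (A ⊗[K] A) ⊗[K] Aᵐᵒᵖ) :
    traceMapFst K A (((a ⊗ₜ[K] (1 : A)) ⊗ₜ[K] op b) * p) =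
      traceMapFst K A (p * (((1 : A) ⊗ₜ[K] a) ⊗ₜ[K] op b)) := by
  refine LinearMap.congr_fun
    (f := traceMapFst K A ∘ₗ LinearMap.mulLeft K ((a ⊗ₜ[K] (1 : A)) ⊗ₜ[K] op b))
    (g := traceMapFst K A ∘ₗ LinearMap.mulRight K (((1 : A) ⊗ₜ[K] a) ⊗ₜ[K] op b)) ?_ p
  ext x y z
  simp [Algebra.TensorProduct.tmul_mul_tmul, mul_assoc, cycComm_mk_mul_comm K b]

lemma traceMapSnd_tLAct (a b : A) (q : A ⊗[K] (Aᵐᵒᵖ ⊗[K] Aᵐᵒᵖ)) :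
    traceMapSnd K A ((a ⊗ₜ[K] ((op b : Aᵐᵒᵖ) ⊗ₜ[K] (1 : Aᵐᵒᵖ))) * q) =
      traceMapSnd K A (q * (a ⊗ₜ[K] ((1 : Aᵐᵒᵖ) ⊗ₜ[K] op b))) := by
  refine LinearMap.congr_fun
    (f := traceMapSnd K A ∘ₗ LinearMap.mulLeft K (a ⊗ₜ[K] (op b ⊗ₜ[K] (1 : Aᵐᵒᵖ))))
    (g := traceMapSnd K A ∘ₗ LinearMap.mulRight K (a ⊗ₜ[K] ((1 : Aᵐᵒᵖ) ⊗ₜ[K] op b))) ?_ q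
  ext x y z
  simp [Algebra.TensorProduct.tmul_mul_tmul, mul_assoc, cycComm_mk_mul_comm K a]

variable (K A) in
def traceMap : Trip K A →ₗ[K] (A ⊗[K] (A ⧸ cycComm K A)) × ((A ⧸ cycComm K A) ⊗[K] A) :=
  (traceMapFst K A).prodMap (traceMapSnd K A)

lemma tripComm_le_ker_traceMap : tripComm K A ≤ LinearMap.ker (traceMap K A) :=
  tripComm_le_ker _ fun a b _ ↦ Prod.ext (traceMapFst_tLAct a b _) (traceMapSnd_tLAct a b _)

variable (K A) in
def traceTripToSum :
    (Trip K A ⧸ tripComm K A) →ₗ[K] (A ⊗[K] (A ⧸ cycComm K A)) × ((A ⧸ cycComm K A) ⊗[K] A) :=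
  (tripComm K A).liftQ _ tripComm_le_ker_traceMap

variable (K A) in
def oneTmulTmulOp : A →ₗ[K] A →ₗ[K] Trip K A ⧸ tripComm K A :=
  LinearMap.mk₂ K (fun z u ↦ Submodule.Quotient.mk (((1 : A) ⊗ₜ[K] u) ⊗ₜ[K] op z, 0))
    (fun _ _ _ ↦ by simp [tmul_add, ← Submodule.Quotient.mk_add])
    (fun _ _ _ ↦ by simp [tmul_smul, ← Submodule.Quotient.mk_smul])
    (fun _ _ _ ↦ by simp [tmul_add, add_tmul, ← Submodule.Quotient.mk_add])
    (fun _ _ _ ↦ by simp [tmul_smul, smul_tmul', ← Submodule.Quotient.mk_smul])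

variable (K A) in
def tmulOneTmulOp : A →ₗ[K] A →ₗ[K] Trip K A ⧸ tripComm K A :=
  LinearMap.mk₂ K (fun x v ↦ Submodule.Quotient.mk (0, x ⊗ₜ[K] ((1 : Aᵐᵒᵖ) ⊗ₜ[K] op v)))
    (fun _ _ _ ↦ by simp [add_tmul, ← Submodule.Quotient.mk_add])
    (fun _ _ _ ↦ by simp [smul_tmul', ← Submodule.Quotient.mk_smul])
    (fun _ _ _ ↦ by simp [tmul_add, ← Submodule.Quotient.mk_add])
    (fun _ _ _ ↦ by simp [tmul_smul, ← Submodule.Quotient.mk_smul])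

@[simp] lemma oneTmulTmulOp_apply (z u : A) :
    oneTmulTmulOp K A z u = Submodule.Quotient.mk (((1 : A) ⊗ₜ[K] u) ⊗ₜ[K] op z, 0) := rfl

@[simp] lemma tmulOneTmulOp_apply (x v : A) :
    tmulOneTmulOp K A x v = Submodule.Quotient.mk (0, x ⊗ₜ[K] ((1 : Aᵐᵒᵖ) ⊗ₜ[K] op v)) := rfl

lemma cycComm_le_ker_oneTmulTmulOp : cycComm K A ≤ LinearMap.ker (oneTmulTmulOp K A) :=
  cycComm_le_ker _ fun a b ↦ LinearMap.ext fun u ↦ by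
    simpa using tripComm_mk_inl (K := K) 1 b 1 u a

lemma cycComm_le_ker_tmulOneTmulOp : cycComm K A ≤ LinearMap.ker (tmulOneTmulOp K A) :=
  cycComm_le_ker _ fun a b ↦ LinearMap.ext fun v ↦ by
    simpa using tripComm_mk_inr (K := K) a 1 b 1 v

variable (K A) in
def traceTripInv :
    (A ⊗[K] (A ⧸ cycComm K A)) × ((A ⧸ cycComm K A) ⊗[K] A) →ₗ[K] Trip K A ⧸ tripComm K A :=
  (TensorProduct.lift ((cycComm K A).liftQ _ cycComm_le_ker_oneTmulTmulOp).flip).coprod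
    (TensorProduct.lift ((cycComm K A).liftQ _ cycComm_le_ker_tmulOneTmulOp))

@[simp] lemma traceTripInv_inl (u z : A) :
    traceTripInv K A (u ⊗ₜ[K] Submodule.Quotient.mk z, 0) =
      Submodule.Quotient.mk (((1 : A) ⊗ₜ[K] u) ⊗ₜ[K] op z, 0) := by
  simp [traceTripInv]

@[simp] lemma traceTripInv_inr (x v : A) :
    traceTripInv K A (0, Submodule.Quotient.mk x ⊗ₜ[K] v) =
      Submodule.Quotient.mk (0, x ⊗ₜ[K] ((1 : Aᵐᵒᵖ) ⊗ₜ[K] op v)) := by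
  simp [traceTripInv]

lemma traceTripToSum_comp_traceTripInv :
    traceTripToSum K A ∘ₗ traceTripInv K A = LinearMap.id := by
  refine LinearMap.prod_ext (TensorProduct.ext' fun u z ↦ ?_) (TensorProduct.ext' fun x v ↦ ?_)
  · induction z using Submodule.Quotient.induction_on
    simp [traceTripToSum, traceMap]
  · induction x using Submodule.Quotient.induction_on
    simp [traceTripToSum, traceMap]

lemma traceTripInv_comp_traceTripToSum :
    traceTripInv K A ∘ₗ traceTripToSum K A = LinearMap.id := by
  ext x y z
  · simpa [traceTripToSum, traceMap] using (tripComm_mk_inl x 1 1 y (unop z)).symm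
  · simpa [traceTripToSum, traceMap] using (tripComm_mk_inr 1 (unop y) x 1 (unop z)).symm

end TraceTrip

/-- The trace space `|trip(A)|` of `trip(A)` as an `Aᵉ`-bimodule is
canonically isomorphic to `(A ⊗ |A|) ⊕ (|A| ⊗ A)` via `x⊗y⊗z̄ ↦ yx ⊗ |z|` and
`x⊗ȳ⊗z̄ ↦ |x| ⊗ yz`. -/
theorem stmt5 :
    ∃ Φ : ((Trip K A) ⧸ tripComm K A) ≃ₗ[K]
        ((A ⊗[K] (A ⧸ cycComm K A)) × ((A ⧸ cycComm K A) ⊗[K] A)),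
      (∀ x y z : A,
        Φ (Submodule.Quotient.mk ((x ⊗ₜ[K] y) ⊗ₜ[K] op z, 0)) =
          ((y * x) ⊗ₜ[K] Submodule.Quotient.mk z, 0)) ∧
      (∀ x y z : A,
        Φ (Submodule.Quotient.mk (0, x ⊗ₜ[K] (op y ⊗ₜ[K] op z))) =
          (0, (Submodule.Quotient.mk x) ⊗ₜ[K] (y * z))) :=
  ⟨.ofLinearMap _ _ traceTripToSum_comp_traceTripInv traceTripInv_comp_traceTripToSum,
    fun x y z ↦ by simp [traceTripToSum, traceMap],
    fun x y z ↦ by simp [traceTripToSum, traceMap]⟩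

end
end

section
/- Let 𝒜 be a K-linear category with object set Ob(𝒜), A its category algebra, and S the subalgebra generated by the idempotents [1_v]. For an 𝒜-bimodule ℳ with associated A-bimodule M = ⊕_{v,w} ℳ(v,w), the map f ↦ [f] = ⊕_{v,w} f(v,w) gives a K-linear isomorphism Der(𝒜, ℳ) ≅ Der_S(A, M) between derivations of the category 𝒜 with values in ℳ and S-linear derivations of A with values in M. -/
/-!
Since `A = ⊕_{v,w} 𝒜(v,w)`, an additive map out of `A` is freely determined by its values on the
elements `[f]`, and every identity between biadditive expressions may be checked on pairs of
them. So a family `F` extends uniquely to an additive `g : A → M`, and the Leibniz rule for `g`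
reduces to products `[x][y]`: for composable `x, y` it is the Leibniz rule of `F`, and otherwise
both sides vanish, because `F x` and `F y` are absorbed by the idempotents at their end points.
Leibniz for `1_v ∘ 1_v` gives `F 1_v = 0`, so `g` vanishes on the idempotents `[1_v]`, hence on the algebra `S` they generate.
Conversely, `S`-linearity of a derivation `g` gives `[1_v] g[f] = g([1_v][f]) = g[f]`.
-/

open CategoryTheory MulOpposite DirectSum

namespace DirectSum

variable {ι : Type*} [DecidableEq ι] {β : ι → Type*} [∀ i, AddCommMonoid (β i)]
  {A : Type*} [AddCommMonoid A] {φ : ∀ i, β i →+ A}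

theorem induction_of_toAddMonoid_surjective (hφ : Function.Surjective (toAddMonoid φ))
    {P : A → Prop} (zero : P 0) (add : ∀ a b, P a → P b → P (a + b))
    (of : ∀ i x, P (φ i x)) (a : A) : P a := by
  obtain ⟨d, rfl⟩ := hφ a
  induction d using DirectSum.induction_on with
  | zero => simpa using zero
  | of i x => simpa using of i x
  | add d d' hd hd' => simpa using add _ _ hd hd'

theorem addMonoidHom_ext_of_toAddMonoid_surjective {M : Type*} [AddCommMonoid M]
    (hφ : Function.Surjective (toAddMonoid φ)) {g g' : A →+ M}
    (h : ∀ i x, g (φ i x) = g' (φ i x)) : g = g' :=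
  (AddMonoidHom.cancel_right hφ).1 (addHom_ext fun i x => by simpa using h i x)

theorem exists_addMonoidHom_apply_eq_of_toAddMonoid_bijective {M : Type*} [AddCommMonoid M]
    (hφ : Function.Bijective (toAddMonoid φ)) (F : ∀ i, β i →+ M) :
    ∃ g : A →+ M, ∀ i x, g (φ i x) = F i x := by
  refine ⟨(toAddMonoid F).comp (AddEquiv.ofBijective _ hφ).symm.toAddMonoidHom, fun i x => ?_⟩
  have hsymm : (AddEquiv.ofBijective _ hφ).symm (φ i x) = of β i x := by
    rw [AddEquiv.symm_apply_eq]
    simp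
  simp [hsymm]

end DirectSum

section Leibniz

variable {A M : Type*} [Ring A] [AddCommGroup M] [Module A M] [Module Aᵐᵒᵖ M]

theorem smul_apply_eq_of_mul_eq {g : A → M} (hg : ∀ a b, g (a * b) = op b • g a + a • g b)
    {e a : A} (he : g e = 0) (hea : e * a = a) : e • g a = g a := by
  have h := hg e a
  rwa [hea, he, smul_zero, zero_add, eq_comm] at h

theorem op_smul_apply_eq_of_mul_eq {g : A → M} (hg : ∀ a b, g (a * b) = op b • g a + a • g b)
    {e a : A} (he : g e = 0) (hae : a * e = a) : op e • g a = g a := by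
  have h := hg a e
  rwa [hae, he, smul_zero, add_zero, eq_comm] at h

theorem apply_one_eq_zero_of_leibniz {g : A → M}
    (hg : ∀ a b, g (a * b) = op b • g a + a • g b) : g 1 = 0 := by
  have h := hg 1 1
  rwa [mul_one, op_one, one_smul, one_smul, left_eq_add] at h

theorem apply_eq_zero_of_mem_adjoin {K : Type*} [CommSemiring K] [Algebra K A] [Module K M]
    (g : A →ₗ[K] M) (hg : ∀ a b, g (a * b) = op b • g a + a • g b) {T : Set A}
    (hT : ∀ t ∈ T, g t = 0) : ∀ s ∈ Algebra.adjoin K T, g s = 0 := by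
  intro s hs
  induction hs using Algebra.adjoin_induction with
  | mem t ht => exact hT t ht
  | algebraMap r =>
    rw [Algebra.algebraMap_eq_smul_one, map_smul, apply_one_eq_zero_of_leibniz hg, smul_zero]
  | add x y _ _ hx hy => rw [map_add, hx, hy, add_zero]
  | mul x y _ _ hx hy => rw [hg, hx, hy, smul_zero, smul_zero, add_zero]

theorem leibniz_of_toAddMonoid_surjective {ι : Type*} [DecidableEq ι] {β : ι → Type*}
    [∀ i, AddCommMonoid (β i)] {φ : ∀ i, β i →+ A} (hφ : Function.Surjective (toAddMonoid φ))
    (g : A →+ M)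
    (hgφ : ∀ i j x y, g (φ i x * φ j y) = op (φ j y) • g (φ i x) + φ i x • g (φ j y))
    (a b : A) : g (a * b) = op b • g a + a • g b := by
  induction a using induction_of_toAddMonoid_surjective hφ generalizing b with
  | zero => simp
  | add a a' ha ha' =>
    simp only [add_mul, map_add, ha, ha', smul_add, add_smul]
    abel
  | of i x =>
    induction b using induction_of_toAddMonoid_surjective hφ with
    | zero => simp
    | add b b' hb hb' =>
      simp only [mul_add, map_add, hb, hb', smul_add, MulOpposite.op_add, add_smul]
      abel
    | of j y => exact hgφ i j x y

end Leibniz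

section CategoryAlgebra

variable {C A M : Type*} [Category C] [Ring A] [AddCommGroup M] [Module A M] [Module Aᵐᵒᵖ M]
  {em : ∀ {v w : C}, (v ⟶ w) → A} {F : ∀ {v w : C}, (v ⟶ w) → M}

theorem map_id_eq_zero_of_leibniz
    (hFid : ∀ (v w : C) (f : v ⟶ w), em (𝟙 v) • F f = F f ∧ op (em (𝟙 w)) • F f = F f)
    (hFcomp : ∀ (u v w : C) (x : u ⟶ v) (y : v ⟶ w), F (x ≫ y) = op (em y) • F x + em x • F y)
    (v : C) : F (𝟙 v) = 0 := by
  have h := hFcomp v v v (𝟙 v) (𝟙 v)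
  rwa [Category.comp_id, (hFid v v (𝟙 v)).2, (hFid v v (𝟙 v)).1, left_eq_add] at h

theorem leibniz_em_mul_em
    (hcomp : ∀ (v₁ v₂ v₃ : C) (x : v₁ ⟶ v₂) (y : v₂ ⟶ v₃), em x * em y = em (x ≫ y))
    (horth : ∀ (v₁ v₂ v₃ v₄ : C) (x : v₁ ⟶ v₂) (y : v₃ ⟶ v₄), v₂ ≠ v₃ → em x * em y = 0)
    (hFid : ∀ (v w : C) (f : v ⟶ w), em (𝟙 v) • F f = F f ∧ op (em (𝟙 w)) • F f = F f)
    (hFcomp : ∀ (u v w : C) (x : u ⟶ v) (y : v ⟶ w), F (x ≫ y) = op (em y) • F x + em x • F y)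
    (g : A →+ M) (hg : ∀ (v w : C) (f : v ⟶ w), g (em f) = F f)
    {v₁ v₂ v₃ v₄ : C} (x : v₁ ⟶ v₂) (y : v₃ ⟶ v₄) :
    g (em x * em y) = op (em y) • g (em x) + em x • g (em y) := by
  rw [hg, hg]
  by_cases h : v₂ = v₃
  · subst h
    rw [hcomp, hg, hFcomp]
  · have hx : op (em y) • F x = 0 := by
      rw [← (hFid _ _ x).2, smul_smul, ← op_mul, horth _ _ _ _ _ y h, op_zero, zero_smul]
    have hy : em x • F y = 0 := by
      rw [← (hFid _ _ y).1, smul_smul, horth _ _ _ _ x _ h, zero_smul]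
    rw [horth _ _ _ _ x y h, map_zero, hx, hy, add_zero]

end CategoryAlgebra

theorem stmt17_general (K : Type*) [Field K]
    (C : Type*) [Category C] [Preadditive C] [CategoryTheory.Linear K C]
    [DecidableEq C]
    (A : Type*) [Ring A] [Algebra K A]
    (em : ∀ {v w : C}, (v ⟶ w) → A)
    (hadd : ∀ (v w : C) (f g : v ⟶ w), em (f + g) = em f + em g)
    (hsmul : ∀ (v w : C) (k : K) (f : v ⟶ w), em (k • f) = k • em f)
    (hcomp : ∀ (v₁ v₂ v₃ : C) (x : v₁ ⟶ v₂) (y : v₂ ⟶ v₃), em x * em y = em (x ≫ y))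
    (horth : ∀ (v₁ v₂ v₃ v₄ : C) (x : v₁ ⟶ v₂) (y : v₃ ⟶ v₄),
      v₂ ≠ v₃ → em x * em y = 0)
    -- `A = ⊕_{v,w} 𝒜(v,w)` as a `K`-vector space
    (hbij : Function.Bijective
      ⇑(DirectSum.toAddMonoid (fun p : C × C =>
          AddMonoidHom.mk' (fun f : p.1 ⟶ p.2 => em f) (hadd p.1 p.2))))
    -- `M` is an `A`-bimodule
    (M : Type*) [AddCommGroup M] [Module K M] [Module A M] [Module Aᵐᵒᵖ M] :
    -- (a) every `S`-linear derivation `g : A → M` restricts to a derivation of the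
    -- category `𝒜` with values in the `𝒜`-bimodule `ℳ(v,w) = [1_v]M[1_w]`
    (∀ g : A →ₗ[K] M,
      (∀ a b : A, g (a * b) = (op b : Aᵐᵒᵖ) • g a + a • g b) →
      (∀ s ∈ Algebra.adjoin K {x : A | ∃ v : C, x = em (𝟙 v)}, g s = 0) →
      ((∀ (v w : C) (f : v ⟶ w),
          em (𝟙 v) • g (em f) = g (em f) ∧
          (op (em (𝟙 w)) : Aᵐᵒᵖ) • g (em f) = g (em f)) ∧
        (∀ (u v w : C) (x : u ⟶ v) (y : v ⟶ w),
          g (em (x ≫ y)) = (op (em y) : Aᵐᵒᵖ) • g (em x) + em x • g (em y)))) ∧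
    -- (b) conversely, every derivation of the category `𝒜` with values in `ℳ` extends to
    -- a unique `S`-linear derivation `A → M`
    (∀ F : ∀ {v w : C}, (v ⟶ w) → M,
      (∀ (v w : C) (f g : v ⟶ w), F (f + g) = F f + F g) →
      (∀ (v w : C) (k : K) (f : v ⟶ w), F (k • f) = k • F f) →
      (∀ (v w : C) (f : v ⟶ w),
        em (𝟙 v) • F f = F f ∧ (op (em (𝟙 w)) : Aᵐᵒᵖ) • F f = F f) →
      (∀ (u v w : C) (x : u ⟶ v) (y : v ⟶ w),
        F (x ≫ y) = (op (em y) : Aᵐᵒᵖ) • F x + em x • F y) →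
      ∃! g : A →ₗ[K] M,
        (∀ a b : A, g (a * b) = (op b : Aᵐᵒᵖ) • g a + a • g b) ∧
        (∀ s ∈ Algebra.adjoin K {x : A | ∃ v : C, x = em (𝟙 v)}, g s = 0) ∧
        (∀ (v w : C) (f : v ⟶ w), g (em f) = F f)) := by
  refine ⟨fun g hg hS => ⟨fun v w f => ⟨?_, ?_⟩, fun u v w x y => hcomp u v w x y ▸ hg _ _⟩,
    fun F hFadd hFsmul hFid hFcomp => ?_⟩
  · exact smul_apply_eq_of_mul_eq hg (hS _ (Algebra.subset_adjoin ⟨v, rfl⟩))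
      (by rw [hcomp, Category.id_comp])
  · exact op_smul_apply_eq_of_mul_eq hg (hS _ (Algebra.subset_adjoin ⟨w, rfl⟩))
      (by rw [hcomp, Category.comp_id])
  obtain ⟨g, hg⟩ := DirectSum.exists_addMonoidHom_apply_eq_of_toAddMonoid_bijective hbij
    fun p => AddMonoidHom.mk' (fun f : p.1 ⟶ p.2 => F f) (hFadd p.1 p.2)
  have hgF : ∀ (v w : C) (f : v ⟶ w), g (em f) = F f := fun v w f => hg (v, w) f
  have hLeib := leibniz_of_toAddMonoid_surjective hbij.2 g
    fun _ _ x y => leibniz_em_mul_em hcomp horth hFid hFcomp g hgF x y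
  have hgK (k : K) (a : A) : g (k • a) = k • g a := by
    induction a using DirectSum.induction_of_toAddMonoid_surjective hbij.2 with
    | zero => simp
    | add a b ha hb => simp only [smul_add, map_add, ha, hb]
    | of p x => simp only [AddMonoidHom.mk'_apply, ← hsmul, hgF, hFsmul]
  let gK : A →ₗ[K] M := { g with map_smul' := hgK }
  have hS : ∀ s ∈ Algebra.adjoin K {x : A | ∃ v : C, x = em (𝟙 v)}, gK s = 0 := by
    refine apply_eq_zero_of_mem_adjoin gK hLeib ?_
    rintro _ ⟨v, rfl⟩
    exact (hgF v v (𝟙 v)).trans (map_id_eq_zero_of_leibniz hFid hFcomp v)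
  refine ⟨gK, ⟨hLeib, hS, hgF⟩, fun g' ⟨_, _, hg'⟩ => LinearMap.toAddMonoidHom_injective ?_⟩
  exact DirectSum.addMonoidHom_ext_of_toAddMonoid_surjective hbij.2
    fun p x => (hg' p.1 p.2 x).trans (hgF p.1 p.2 x).symm

/-- Let `𝒜` be a `K`-linear category with finitely many objects, `A` its
category algebra (presented by structure maps `em` with the category-algebra relations and
the direct-sum property), `S ⊆ A` the subalgebra generated by the idempotents `[1_v]`, and
`M` an `A`-bimodule (so that `ℳ(v,w) = [1_v]·M·[1_w]` is the associated `𝒜`-bimodule).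
Then `f ↦ [f]` identifies derivations of the category `𝒜` with values in `ℳ` (families of
`K`-linear maps `𝒜(v,w) → ℳ(v,w)` satisfying the Leibniz rule on composable pairs) with
`S`-linear derivations `A → M`: every `S`-linear derivation restricts to such a family,
and every such family extends uniquely to an `S`-linear derivation of `A`. -/
theorem stmt17 (K : Type*) [Field K] [CharZero K]
    (C : Type*) [Category C] [Preadditive C] [CategoryTheory.Linear K C]
    [Fintype C] [DecidableEq C]
    (A : Type*) [Ring A] [Algebra K A]
    (em : ∀ {v w : C}, (v ⟶ w) → A)
    (hadd : ∀ (v w : C) (f g : v ⟶ w), em (f + g) = em f + em g)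
    (hsmul : ∀ (v w : C) (k : K) (f : v ⟶ w), em (k • f) = k • em f)
    (hcomp : ∀ (v₁ v₂ v₃ : C) (x : v₁ ⟶ v₂) (y : v₂ ⟶ v₃), em x * em y = em (x ≫ y))
    (horth : ∀ (v₁ v₂ v₃ v₄ : C) (x : v₁ ⟶ v₂) (y : v₃ ⟶ v₄),
      v₂ ≠ v₃ → em x * em y = 0)
    (hone : (1 : A) = ∑ v : C, em (𝟙 v))
    -- `A = ⊕_{v,w} 𝒜(v,w)` as a `K`-vector space
    (hbij : Function.Bijective
      ⇑(DirectSum.toAddMonoid (fun p : C × C =>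
          AddMonoidHom.mk' (fun f : p.1 ⟶ p.2 => em f) (hadd p.1 p.2))))
    -- `M` is an `A`-bimodule
    (M : Type*) [AddCommGroup M] [Module K M] [Module A M] [Module Aᵐᵒᵖ M]
    [SMulCommClass A Aᵐᵒᵖ M] [IsScalarTower K A M] [IsScalarTower K Aᵐᵒᵖ M] :
    -- (a) every `S`-linear derivation `g : A → M` restricts to a derivation of the
    -- category `𝒜` with values in the `𝒜`-bimodule `ℳ(v,w) = [1_v]M[1_w]`
    (∀ g : A →ₗ[K] M,
      (∀ a b : A, g (a * b) = (op b : Aᵐᵒᵖ) • g a + a • g b) →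
      (∀ s ∈ Algebra.adjoin K {x : A | ∃ v : C, x = em (𝟙 v)}, g s = 0) →
      ((∀ (v w : C) (f : v ⟶ w),
          em (𝟙 v) • g (em f) = g (em f) ∧
          (op (em (𝟙 w)) : Aᵐᵒᵖ) • g (em f) = g (em f)) ∧
        (∀ (u v w : C) (x : u ⟶ v) (y : v ⟶ w),
          g (em (x ≫ y)) = (op (em y) : Aᵐᵒᵖ) • g (em x) + em x • g (em y)))) ∧
    -- (b) conversely, every derivation of the category `𝒜` with values in `ℳ` extends to
    -- a unique `S`-linear derivation `A → M`
    (∀ F : ∀ {v w : C}, (v ⟶ w) → M,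
      (∀ (v w : C) (f g : v ⟶ w), F (f + g) = F f + F g) →
      (∀ (v w : C) (k : K) (f : v ⟶ w), F (k • f) = k • F f) →
      (∀ (v w : C) (f : v ⟶ w),
        em (𝟙 v) • F f = F f ∧ (op (em (𝟙 w)) : Aᵐᵒᵖ) • F f = F f) →
      (∀ (u v w : C) (x : u ⟶ v) (y : v ⟶ w),
        F (x ≫ y) = (op (em y) : Aᵐᵒᵖ) • F x + em x • F y) →
      ∃! g : A →ₗ[K] M,
        (∀ a b : A, g (a * b) = (op b : Aᵐᵒᵖ) • g a + a • g b) ∧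
        (∀ s ∈ Algebra.adjoin K {x : A | ∃ v : C, x = em (𝟙 v)}, g s = 0) ∧
        (∀ (v w : C) (f : v ⟶ w), g (em f) = F f)) :=
  stmt17_general K C A em hadd hsmul hcomp horth hbij M
end
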